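/- arXiv:1112.6189 — 4 statements merged into one kernel-verified Lean document; each statement's English description precedes it below -/
import Mathlib

section
/- Let m, n ≥ 0. Then Q^{(n)}·P^{(m)} = Σ_{k=0}^{min(m,n)} [k+1]·P^{(m−k)}·Q^{(n−k)} in A. (This is the case i = j of the commutation relations of Lemma 1 for the quantum Heisenberg algebra.) -/
/-!
Put `Q(w) = exp (∑ a_m w^m / [m])` and `P(z) = exp (∑ b_m z^m / [m])`. Since `[a_r, b_s]` is a
scalar, `[a_r, P(z)] = ([2r] / r) z^r P(z)`, i.e.
`a_r P^{(m)} = P^{(m)} a_r + ([2r] / r) P^{(m-r)}`. Feeding this into the recursion for `Q^{(n)}`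
and inducting on `n` gives `Q^{(n)} P^{(m)} = ∑ e_k P^{(m-k)} Q^{(n-k)}`, where `e_k` are the
coefficients of `exp (∑ (q^r + q^{-r}) x^r / r) = 1 / ((1 - q x) (1 - q⁻¹ x))`,
that is `e_k = [k+1]`.
-/

/-- The quantum integer `[n] = (q^n - q^{-n})/(q - q^{-1})` in `K = ℚ(q)`,
where `q` is the variable `RatFunc.X`. -/
noncomputable def qint (n : ℤ) : RatFunc ℚ :=
  (RatFunc.X ^ n - RatFunc.X ^ (-n)) / (RatFunc.X - RatFunc.X⁻¹)

open Finset

namespace RatFunc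

variable {K : Type*} [Field K]

theorem intDegree_X_zpow (k : ℤ) : intDegree ((X : RatFunc K) ^ k) = k := by
  have h (n : ℕ) : intDegree ((X : RatFunc K) ^ n) = n := by
    rw [← algebraMap_X, ← map_pow, intDegree_polynomial, Polynomial.natDegree_X_pow]
  obtain ⟨n, rfl | rfl⟩ := Int.eq_nat_or_neg k
  · exact_mod_cast h n
  · rw [zpow_neg, intDegree_inv, zpow_natCast, h]

theorem X_zpow_injective : Function.Injective ((X : RatFunc K) ^ · : ℤ → RatFunc K) :=
  fun a b hab => by simpa only [intDegree_X_zpow] using congrArg intDegree hab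

end RatFunc

local notation "q" => (RatFunc.X : RatFunc ℚ)

theorem qint_denom_ne_zero : q - q⁻¹ ≠ 0 := by
  have h := (RatFunc.X_zpow_injective (K := ℚ)).ne (show (1 : ℤ) ≠ -1 by decide)
  rwa [zpow_one, zpow_neg_one, ← sub_ne_zero] at h

theorem qint_ne_zero {k : ℤ} (hk : k ≠ 0) : qint k ≠ 0 :=
  div_ne_zero (sub_ne_zero.mpr (RatFunc.X_zpow_injective.ne (by omega))) qint_denom_ne_zero

theorem qint_one : qint 1 = 1 := by
  rw [qint, zpow_one, zpow_neg_one, div_self qint_denom_ne_zero]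

theorem qint_zero : qint 0 = 0 := by
  rw [qint, neg_zero, sub_self, zero_div]

theorem qint_neg (k : ℤ) : qint (-k) = -qint k := by
  rw [qint, qint, neg_neg, ← neg_sub, neg_div]

theorem qint_mul_zpow_add_zpow_neg (a r : ℤ) :
    qint a * (q ^ r + q ^ (-r)) = qint (a + r) + qint (a - r) := by
  have hq : q ≠ 0 := RatFunc.X_ne_zero
  rw [qint, qint, qint, div_mul_eq_mul_div, ← add_div]
  congr 1
  simp only [sub_eq_add_neg, neg_add, neg_neg, zpow_add₀ hq]
  ring

theorem qint_two_mul_div {r : ℤ} (hr : r ≠ 0) : qint (2 * r) / qint r = q ^ r + q ^ (-r) := by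
  rw [div_eq_iff (qint_ne_zero hr), mul_comm (_ + _), qint_mul_zpow_add_zpow_neg, sub_self,
    qint_zero, add_zero, two_mul]

theorem sum_qint_sub_two_mul (j : ℕ) : ∑ r ∈ Icc 1 j, qint (j + 1 - 2 * r) = 0 := by
  refine sum_involution (fun r _ => j + 1 - r) (fun r hr => ?_) (fun r hr hne => ?_)
    (fun r hr => ?_) (fun r hr => ?_) <;> rw [mem_Icc] at hr
  · rw [show (j + 1 - 2 * ((j + 1 - r : ℕ) : ℤ)) = -(j + 1 - 2 * r) by omega, qint_neg,
      add_neg_cancel]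
  · rintro h
    rw [show (j + 1 - 2 * r : ℤ) = 0 by omega, qint_zero] at hne
    exact hne rfl
  · rw [mem_Icc]
    omega
  · omega

theorem sum_qint_mul_zpow_add_zpow_neg (j : ℕ) :
    ∑ r ∈ Icc 1 j, qint (j - r + 1) * (q ^ (r : ℤ) + q ^ (-r : ℤ)) = j * qint (j + 1) := by
  have h (r : ℕ) : qint (j - r + 1) * (q ^ (r : ℤ) + q ^ (-r : ℤ)) =
      qint (j + 1) + qint (j + 1 - 2 * r) := by
    rw [qint_mul_zpow_add_zpow_neg]
    congr 2 <;> ring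
  simp only [h, sum_add_distrib, sum_qint_sub_two_mul, sum_const, Nat.card_Icc, nsmul_eq_mul,
    add_zero, add_tsub_cancel_right]

/-- When the `c m` commute, `R n` is the coefficient of `z ^ n` in
`exp (∑ m, (w m / m) • c m z ^ m)`; in general the recursion is the definition.
Negative indices carry zeros. -/
structure IsExpCoeffs {F A : Type*} [Field F] [Ring A] [Algebra F A]
    (w : ℕ → F) (c : ℕ → A) (R : ℤ → A) : Prop where
  apply_zero : R 0 = 1
  apply_of_neg : ∀ k : ℤ, k < 0 → R k = 0
  smul_apply_of_pos : ∀ n : ℕ, 1 ≤ n → (n : F) • R n = ∑ m ∈ Icc 1 n, w m • (c m * R ((n : ℤ) - m))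

theorem mul_mul_sub_mul_mul_eq {A : Type*} [Ring A] (a x y : A) :
    a * (x * y) - x * y * a = (a * x - x * a) * y + x * (a * y - y * a) := by
  noncomm_ring

namespace IsExpCoeffs

variable {F A : Type*} [Field F] [Ring A] [Algebra F A] {w : ℕ → F} {c : ℕ → A} {R : ℤ → A}

theorem smul_apply (hR : IsExpCoeffs w c R) (n : ℕ) :
    (n : F) • R n = ∑ m ∈ Icc 1 n, w m • (c m * R ((n : ℤ) - m)) := by
  rcases Nat.eq_zero_or_pos n with rfl | hn
  · simp
  · exact hR.smul_apply_of_pos n hn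

theorem sum_eq_smul_of_le (hR : IsExpCoeffs w c R) {n : ℕ} {t : ℤ} (ht : t ≤ n) :
    ∑ m ∈ Icc 1 n, w m • (c m * R (t - m)) = (t : F) • R t := by
  rcases lt_or_ge t 0 with ht0 | ht0
  · rw [hR.apply_of_neg t ht0, smul_zero]
    exact sum_eq_zero fun m hm => by
      rw [hR.apply_of_neg _ (by rw [mem_Icc] at hm; omega), mul_zero, smul_zero]
  · lift t to ℕ using ht0
    rw [Int.cast_natCast, hR.smul_apply]
    refine (sum_subset (Icc_subset_Icc_right (by omega)) fun m hm hmt => ?_).symm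
    rw [mem_Icc] at hm hmt
    rw [hR.apply_of_neg _ (by omega), mul_zero, smul_zero]

theorem commutator_natCast_eq_smul [CharZero F] (hR : IsExpCoeffs w c R) {a : A} {κ : F}
    {r : ℕ} (hr : 1 ≤ r) (ha : ∀ s, 1 ≤ s → a * c s - c s * a = if r = s then κ • 1 else 0)
    (M : ℕ) : a * R M - R M * a = (w r * κ / r) • R (M - r) := by
  induction M using Nat.strong_induction_on with
  | _ M ih =>
  rcases Nat.eq_zero_or_pos M with rfl | hM
  · rw [Nat.cast_zero, hR.apply_zero, hR.apply_of_neg _ (by omega), smul_zero, mul_one, one_mul,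
      sub_self]
  have hterm : ∀ s ∈ Icc 1 M,
      w s • (a * (c s * R ((M : ℤ) - s)) - c s * R ((M : ℤ) - s) * a) =
        (if r = s then (w r * κ) • R ((M : ℤ) - s) else 0) +
          (w r * κ / r) • (w s • (c s * R ((M : ℤ) - r - s))) := by
    intro s hs
    rw [mem_Icc] at hs
    have ih' := ih (M - s) (by omega)
    rw [Nat.cast_sub hs.2] at ih'
    rw [mul_mul_sub_mul_mul_eq, ha s hs.1, ih', sub_right_comm]
    split_ifs with h
    · subst h
      simp only [smul_add, smul_mul_assoc, one_mul, mul_smul_comm, smul_smul]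
      module
    · simp only [zero_mul, zero_add, mul_smul_comm, smul_smul, mul_comm]
  have hδ : ∑ s ∈ Icc 1 M, (if r = s then (w r * κ) • R ((M : ℤ) - s) else 0) =
      (w r * κ) • R ((M : ℤ) - r) := by
    rw [sum_ite_eq]
    split_ifs with h
    · rfl
    · rw [mem_Icc] at h
      rw [hR.apply_of_neg _ (by omega), smul_zero]
  have hr0 : (r : F) ≠ 0 := Nat.cast_ne_zero.mpr (by omega)
  refine (smul_right_inj (Nat.cast_ne_zero.mpr hM.ne' : (M : F) ≠ 0)).mp ?_
  calc (M : F) • (a * R M - R M * a)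
      = ∑ s ∈ Icc 1 M, w s • (a * (c s * R ((M : ℤ) - s)) - c s * R ((M : ℤ) - s) * a) := by
        rw [smul_sub, ← mul_smul_comm, ← smul_mul_assoc, hR.smul_apply, mul_sum, sum_mul,
          ← sum_sub_distrib]
        simp only [mul_smul_comm, smul_mul_assoc, smul_sub]
    _ = (w r * κ) • R ((M : ℤ) - r) +
          (w r * κ / r) • (((M : ℤ) - r : ℤ) : F) • R ((M : ℤ) - r) := by
        rw [sum_congr rfl hterm, sum_add_distrib, hδ, ← smul_sum, hR.sum_eq_smul_of_le (by omega)]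
    _ = (M : F) • (w r * κ / r) • R ((M : ℤ) - r) := by
        rw [smul_smul, smul_smul, ← add_smul]
        congr 1
        field_simp
        push_cast
        ring

theorem commutator_eq_smul [CharZero F] (hR : IsExpCoeffs w c R) {a : A} {κ : F} {r : ℕ}
    (hr : 1 ≤ r) (ha : ∀ s, 1 ≤ s → a * c s - c s * a = if r = s then κ • 1 else 0) (m : ℤ) :
    a * R m - R m * a = (w r * κ / r) • R (m - r) := by
  rcases lt_or_ge m 0 with hm | hm
  · rw [hR.apply_of_neg m hm, hR.apply_of_neg _ (by omega), mul_zero, zero_mul, sub_zero,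
      smul_zero]
  · lift m to ℕ using hm
    exact hR.commutator_natCast_eq_smul hr ha m

end IsExpCoeffs

section Triangle

variable {M : Type*} [AddCommMonoid M]

theorem sum_Icc_sum_range_comm (n : ℕ) (f : ℕ → ℕ → M) :
    ∑ r ∈ Icc 1 n, ∑ k ∈ range (n - r + 1), f r k =
      ∑ k ∈ range (n + 1), ∑ r ∈ Icc 1 (n - k), f r k :=
  sum_comm' fun r k => by simp only [mem_Icc, mem_range]; omega

theorem sum_Icc_sum_range_add (n : ℕ) (f : ℕ → ℕ → ℕ → M) :
    ∑ r ∈ Icc 1 n, ∑ k ∈ range (n - r + 1), f r k (k + r) =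
      ∑ j ∈ range (n + 1), ∑ r ∈ Icc 1 j, f r (j - r) j := by
  have h : ∀ r ∈ Icc 1 n, ∑ k ∈ range (n - r + 1), f r k (k + r) =
      ∑ j ∈ Ico r (n + 1), f r (j - r) j := by
    intro r hr
    rw [mem_Icc] at hr
    rw [sum_Ico_eq_sum_range, show n + 1 - r = n - r + 1 by omega]
    exact sum_congr rfl fun k _ => by rw [add_comm r k, Nat.add_sub_cancel]
  rw [sum_congr rfl h]
  exact sum_comm' fun r j => by simp only [mem_Icc, mem_Ico, mem_range]; omega

end Triangle

namespace IsExpCoeffs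

variable {F A : Type*} [Field F] [CharZero F] [Ring A] [Algebra F A] {w κ : ℕ → F} {a b : ℕ → A}
  {P Q : ℤ → A}

theorem smul_mul_eq_sum_add_sum (hP : IsExpCoeffs w b P) (hQ : IsExpCoeffs w a Q)
    (hab : ∀ r s, 1 ≤ r → 1 ≤ s → a r * b s - b s * a r = if r = s then κ r • 1 else 0)
    {e : ℕ → F} {m n : ℕ}
    (ih : ∀ n' < n, Q n' * P m = ∑ k ∈ range (n' + 1), e k • (P (m - k) * Q (n' - k))) :
    (n : F) • (Q n * P m) =
      ∑ k ∈ range (n + 1), e k • (P (m - k) * ((((n : ℤ) - k : ℤ) : F) • Q ((n : ℤ) - k))) +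
        ∑ j ∈ range (n + 1), (∑ r ∈ Icc 1 j, w r * (w r * κ r / r) * e (j - r)) •
          (P (m - j) * Q (n - j)) := by
  have hterm : ∀ r ∈ Icc 1 n, w r • (a r * (Q ((n : ℤ) - r) * P m)) =
      ∑ k ∈ range (n - r + 1), (e k • (P (m - k) * (w r • (a r * Q ((n : ℤ) - k - r)))) +
        (w r * (w r * κ r / r) * e k) • (P (m - ↑(k + r)) * Q (n - ↑(k + r)))) := by
    intro r hr
    rw [mem_Icc] at hr
    have ih' := ih (n - r) (by omega)
    rw [Nat.cast_sub hr.2] at ih'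
    rw [ih', mul_sum, smul_sum]
    refine sum_congr rfl fun k _ => ?_
    have hcomm := eq_add_of_sub_eq' (hP.commutator_eq_smul hr.1 (hab r · hr.1 ·) ((m : ℤ) - k))
    rw [mul_smul_comm, ← mul_assoc, hcomm, add_mul, mul_assoc, smul_mul_assoc]
    push_cast
    rw [sub_right_comm (n : ℤ) r k, sub_sub, sub_sub, add_comm (k : ℤ) r]
    simp only [smul_add, mul_smul_comm, smul_smul]
    module
  calc (n : F) • (Q n * P m) = ∑ r ∈ Icc 1 n, w r • (a r * (Q ((n : ℤ) - r) * P m)) := by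
        rw [← smul_mul_assoc, hQ.smul_apply, sum_mul]
        simp only [smul_mul_assoc, mul_assoc]
    _ = ∑ k ∈ range (n + 1),
          e k • (P (m - k) * ∑ r ∈ Icc 1 (n - k), w r • (a r * Q ((n : ℤ) - k - r))) +
        ∑ j ∈ range (n + 1), (∑ r ∈ Icc 1 j, w r * (w r * κ r / r) * e (j - r)) •
          (P (m - j) * Q (n - j)) := by
        rw [sum_congr rfl hterm]
        simp only [sum_add_distrib]
        rw [sum_Icc_sum_range_comm,
          sum_Icc_sum_range_add (f := fun r k j => (w r * (w r * κ r / r) * e k) •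
            (P (m - j) * Q (n - j)))]
        simp only [mul_sum, smul_sum, sum_smul]
    _ = _ := by
        congr 1
        refine sum_congr rfl fun k hk => ?_
        rw [mem_range] at hk
        rw [hQ.sum_eq_smul_of_le (by omega)]

theorem mul_eq_sum_smul_mul (hP : IsExpCoeffs w b P) (hQ : IsExpCoeffs w a Q)
    (hab : ∀ r s, 1 ≤ r → 1 ≤ s → a r * b s - b s * a r = if r = s then κ r • 1 else 0)
    {e : ℕ → F} (he0 : e 0 = 1)
    (he : ∀ j : ℕ, (j : F) * e j = ∑ r ∈ Icc 1 j, w r * (w r * κ r / r) * e (j - r)) (m n : ℕ) :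
    Q n * P m = ∑ k ∈ range (n + 1), e k • (P (m - k) * Q (n - k)) := by
  induction n using Nat.strong_induction_on with
  | _ n ih =>
  rcases Nat.eq_zero_or_pos n with rfl | hn
  · simp [hQ.apply_zero, he0]
  refine (smul_right_inj (Nat.cast_ne_zero.mpr hn.ne' : (n : F) ≠ 0)).mp ?_
  rw [smul_mul_eq_sum_add_sum hP hQ hab ih, smul_sum, ← sum_add_distrib]
  refine sum_congr rfl fun k _ => ?_
  rw [← he, mul_smul_comm, smul_smul, smul_smul, ← add_smul]
  congr 1
  push_cast
  ring

end IsExpCoeffs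

theorem heisenberg_QP_same_node_general
    {A : Type*} [Ring A] [Algebra (RatFunc ℚ) A]
    (b a : ℕ → A)
    (P Q : ℤ → A)
    (hP0 : P 0 = 1)
    (hPneg : ∀ k : ℤ, k < 0 → P k = 0)
    (hPrec : ∀ n : ℕ, 1 ≤ n →
      (n : RatFunc ℚ) • P n =
        ∑ m ∈ Finset.Icc 1 n, ((m : RatFunc ℚ) / qint m) • (b m * P ((n : ℤ) - m)))
    (hQ0 : Q 0 = 1)
    (hQneg : ∀ k : ℤ, k < 0 → Q k = 0)
    (hQrec : ∀ n : ℕ, 1 ≤ n →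
      (n : RatFunc ℚ) • Q n =
        ∑ m ∈ Finset.Icc 1 n, ((m : RatFunc ℚ) / qint m) • (a m * Q ((n : ℤ) - m)))
    (hcomm : ∀ m m' : ℕ, 1 ≤ m → 1 ≤ m' →
      a m * b m' - b m' * a m =
        if m = m' then (qint (2 * m) * qint m / (m : RatFunc ℚ)) • (1 : A) else 0)
    (m n : ℕ) :
    Q n * P m =
      ∑ k ∈ Finset.range (min m n + 1),
        qint ((k : ℤ) + 1) • (P ((m : ℤ) - k) * Q ((n : ℤ) - k)) := by
  have hP : IsExpCoeffs (fun r => (r : RatFunc ℚ) / qint r) b P := ⟨hP0, hPneg, hPrec⟩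
  have hQ : IsExpCoeffs (fun r => (r : RatFunc ℚ) / qint r) a Q := ⟨hQ0, hQneg, hQrec⟩
  have he (j : ℕ) : (j : RatFunc ℚ) * qint (j + 1) = ∑ r ∈ Icc 1 j,
      r / qint r * (r / qint r * (qint (2 * r) * qint r / r) / r) * qint ((j - r : ℕ) + 1) := by
    rw [← sum_qint_mul_zpow_add_zpow_neg]
    refine sum_congr rfl fun r hr => ?_
    rw [mem_Icc] at hr
    have hr0 : (r : RatFunc ℚ) ≠ 0 := Nat.cast_ne_zero.mpr (by omega)
    have hqr : qint r ≠ 0 := qint_ne_zero (by omega)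
    rw [Nat.cast_sub hr.2, ← qint_two_mul_div (by omega)]
    field_simp
  rw [hP.mul_eq_sum_smul_mul hQ (κ := fun r => qint (2 * r) * qint r / r) hcomm
    (e := fun k => qint (k + 1)) (by rw [Nat.cast_zero, zero_add, qint_one]) he]
  refine (sum_subset (range_subset_range.mpr (by omega)) fun k hk hkm => ?_).symm
  rw [mem_range] at hk hkm
  rw [hP.apply_of_neg _ (by omega), zero_mul, smul_zero]

/-- Lemma 1 (case `i = j`): `Q^{(n)} P^{(m)} = ∑_{k=0}^{min(m,n)} [k+1] P^{(m-k)} Q^{(n-k)}`. -/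
theorem heisenberg_QP_same_node
    {A : Type*} [Ring A] [Algebra (RatFunc ℚ) A]
    (b a : ℕ → A)
    (hb : ∀ m m' : ℕ, Commute (b m) (b m'))
    (ha : ∀ m m' : ℕ, Commute (a m) (a m'))
    (P Q : ℤ → A)
    (hP0 : P 0 = 1)
    (hPneg : ∀ k : ℤ, k < 0 → P k = 0)
    (hPrec : ∀ n : ℕ, 1 ≤ n →
      (n : RatFunc ℚ) • P n =
        ∑ m ∈ Finset.Icc 1 n, ((m : RatFunc ℚ) / qint m) • (b m * P ((n : ℤ) - m)))
    (hQ0 : Q 0 = 1)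
    (hQneg : ∀ k : ℤ, k < 0 → Q k = 0)
    (hQrec : ∀ n : ℕ, 1 ≤ n →
      (n : RatFunc ℚ) • Q n =
        ∑ m ∈ Finset.Icc 1 n, ((m : RatFunc ℚ) / qint m) • (a m * Q ((n : ℤ) - m)))
    (hcomm : ∀ m m' : ℕ, 1 ≤ m → 1 ≤ m' →
      a m * b m' - b m' * a m =
        if m = m' then (qint (2 * m) * qint m / (m : RatFunc ℚ)) • (1 : A) else 0)
    (m n : ℕ) :
    Q n * P m =
      ∑ k ∈ Finset.range (min m n + 1),
        qint ((k : ℤ) + 1) • (P ((m : ℤ) - k) * Q ((n : ℤ) - k)) :=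
  heisenberg_QP_same_node_general b a P Q hP0 hPneg hPrec hQ0 hQneg hQrec hcomm m n
end

section
/- Let m, n ≥ 0. Then Q^{(n)}·P^{(m)} = P^{(m)}·Q^{(n)} + P^{(m−1)}·Q^{(n−1)} in A. (This is the case ⟨i,j⟩ = −1 of the commutation relations of Lemma 1 for the quantum Heisenberg algebra, for two adjacent nodes of the Dynkin diagram.) -/
/-!
`P` and `Q` are the coefficients of `exp (∑ b_m z^m / [m])` and `exp (∑ a_m u^m / [m])`. Feeding
`[a_k, b_l] = δ_kl (-1)^(k+1) [k]^2 / k` into the recursion for `P` gives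
`[a_k, P^(j)] = (-1)^(k+1) ([k] / k) P^(j-k)`, so commuting the two exponentials produces the factor
`exp (∑ (-1)^(k+1) (zu)^k / k) = 1 + zu`. Coefficientwise this is an induction on `n` through the
recursion for `Q`, in which the correction terms form an alternating sum that telescopes to
`P^(m-1) Q^(n-1)`.
-/

open Finset

theorem RatFunc.X_zpow_injective_s1 {F : Type*} [Field F] :
    Function.Injective fun m : ℤ => (RatFunc.X : RatFunc F) ^ m := by
  classical
  intro m n h
  simpa using congrArg (RatFunc.inftyValuation F) h

theorem qint_ne_zero_s1 {n : ℤ} (hn : n ≠ 0) : qint n ≠ 0 := by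
  refine div_ne_zero (sub_ne_zero.2 ((RatFunc.X_zpow_injective_s1 (F := ℚ)).ne (by omega)))
    (sub_ne_zero.2 ?_)
  simpa using (RatFunc.X_zpow_injective_s1 (F := ℚ)).ne (show (1 : ℤ) ≠ -1 by decide)

theorem sum_Icc_neg_one_pow_smul_add {K M : Type*} [Ring K] [AddCommGroup M] [Module K M]
    (F : ℕ → M) (n : ℕ) :
    ∑ l ∈ Icc 1 n, (-1 : K) ^ (l + 1) • (F l + F (l + 1)) = F 1 - (-1 : K) ^ n • F (n + 1) := by
  rcases Nat.eq_zero_or_pos n with rfl | hn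
  · simp
  have hterm : ∀ l, (-1 : K) ^ (l + 1) • (F l + F (l + 1)) =
      -((-1 : K) ^ (l + 1 + 1) • F (l + 1) - (-1 : K) ^ (l + 1) • F l) := fun l => by
    rw [pow_succ _ (l + 1), mul_neg_one, neg_smul, smul_add]; abel
  simp only [hterm, sum_neg_distrib, sum_Icc_sub hn (fun l => (-1 : K) ^ (l + 1) • F l)]
  rw [pow_add, pow_add _ n]; simp

section ExpCoeffs

variable {K A : Type*} [Field K] [Ring A] [Algebra K A]

/-- The recursion characterising the coefficients `R j` of `z ^ j` in
`exp (∑ₘ (w m / m) • x m * z ^ m)`, extended by `R j = 0` for `j < 0`. -/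
structure IsExpCoeffs_s1 (w : ℕ → K) (x : ℕ → A) (R : ℤ → A) : Prop where
  zero : R 0 = 1
  neg : ∀ k : ℤ, k < 0 → R k = 0
  recursion : ∀ n : ℕ, 1 ≤ n → (n : K) • R n = ∑ l ∈ Icc 1 n, w l • (x l * R (n - l))

namespace IsExpCoeffs_s1

variable {w : ℕ → K} {x : ℕ → A} {R : ℤ → A}

theorem smul_eq_sum (hR : IsExpCoeffs_s1 w x R) {N : ℕ} {j : ℤ} (hj : j ≤ N) :
    (j : K) • R j = ∑ l ∈ Icc 1 N, w l • (x l * R (j - l)) := by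
  rcases lt_or_ge j 1 with hj1 | hj1
  · have hzero : ∀ l ∈ Icc 1 N, w l • (x l * R (j - l)) = 0 := fun l hl => by
      rw [hR.neg _ (by simp only [mem_Icc] at hl; omega), mul_zero, smul_zero]
    rw [sum_eq_zero hzero]
    rcases lt_or_eq_of_le (show j ≤ 0 by omega) with hneg | rfl
    · rw [hR.neg j hneg, smul_zero]
    · rw [Int.cast_zero, zero_smul]
  · lift j to ℕ using (by omega)
    rw [Int.cast_natCast, hR.recursion j (by omega)]
    refine sum_subset (Icc_subset_Icc_right (by omega)) fun l hl hl' => ?_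
    simp only [mem_Icc, not_and, not_le] at hl hl'
    rw [hR.neg _ (by omega), mul_zero, smul_zero]

theorem mul_sub_mul_eq_smul [CharZero K] (hR : IsExpCoeffs_s1 w x R) {y : A} {k : ℕ} (hk : 1 ≤ k)
    {s : K} (hy : ∀ l, 1 ≤ l → y * x l - x l * y = if k = l then s • 1 else 0) (j : ℤ) :
    y * R j - R j * y = (w k * s / k) • R (j - k) := by
  set c := w k * s / k
  have hk0 : (k : K) ≠ 0 := by exact_mod_cast (show k ≠ 0 by omega)
  have base : ∀ j : ℤ, j ≤ 0 → y * R j - R j * y = c • R (j - k) := by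
    intro j hj
    rw [hR.neg (j - k) (by omega), smul_zero]
    rcases lt_or_eq_of_le hj with hneg | rfl
    · rw [hR.neg j hneg, mul_zero, zero_mul, sub_zero]
    · rw [hR.zero, mul_one, one_mul, sub_self]
  suffices ∀ n : ℕ, y * R n - R n * y = c • R (n - k) by
    rcases le_or_gt j 0 with hj | hj
    · exact base j hj
    · lift j to ℕ using hj.le
      exact this j
  intro n
  induction n using Nat.strong_induction_on with
  | _ n ih =>
  rcases Nat.eq_zero_or_pos n with rfl | hn
  · exact base 0 le_rfl
  have hterm : ∀ l ∈ Icc 1 n, w l • (y * (x l * R (n - l)) - x l * R (n - l) * y) =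
      (if k = l then (w k * s) • R (n - k) else 0) + c • (w l • (x l * R (n - k - l))) := by
    intro l hl
    rw [mem_Icc] at hl
    have hlR : y * R (n - l) - R (n - l) * y = c • R (n - l - k) := by
      simpa [Nat.cast_sub hl.2] using ih (n - l) (by omega)
    rw [show y * (x l * R (n - l)) - x l * R (n - l) * y =
        (y * x l - x l * y) * R (n - l) + x l * (y * R (n - l) - R (n - l) * y) by noncomm_ring,
      hy l hl.1, hlR, sub_right_comm, mul_smul_comm]
    split_ifs with hkl
    · subst hkl; rw [smul_mul_assoc, one_mul, smul_add, smul_smul, smul_comm]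
    · rw [zero_mul, zero_add, zero_add, smul_comm]
  have hsum : ∑ l ∈ Icc 1 n, (if k = l then (w k * s) • R (n - k) else 0) =
      (w k * s) • R (n - k) := by
    rw [sum_ite_eq]
    split_ifs with hkn
    · rfl
    · rw [mem_Icc] at hkn; rw [hR.neg _ (by omega), smul_zero]
  refine smul_right_injective A (show (n : K) ≠ 0 by exact_mod_cast hn.ne') ?_
  calc (n : K) • (y * R n - R n * y)
      = ∑ l ∈ Icc 1 n, w l • (y * (x l * R (n - l)) - x l * R (n - l) * y) := by
        rw [smul_sub, ← mul_smul_comm, ← smul_mul_assoc, hR.recursion n hn, mul_sum, sum_mul,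
          ← sum_sub_distrib]
        refine sum_congr rfl fun l _ => ?_
        rw [smul_sub, mul_smul_comm, smul_mul_assoc]
    _ = (w k * s) • R (n - k) + c • (((n - k : ℤ) : K) • R (n - k)) := by
        rw [sum_congr rfl hterm, sum_add_distrib, hsum, ← smul_sum,
          hR.smul_eq_sum (N := n) (by omega)]
    _ = (n : K) • (c • R (n - k)) := by
        rw [smul_smul, smul_smul, ← add_smul]
        congr 1
        simp only [c]; push_cast; field_simp; ring

theorem mul_eq_add_of_commutator [CharZero K] (hR : IsExpCoeffs_s1 w x R) {P : ℤ → A} {c : ℕ → K}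
    (hc : ∀ k, 1 ≤ k → w k * c k = (-1) ^ (k + 1))
    (hxP : ∀ k, 1 ≤ k → ∀ j, x k * P j - P j * x k = c k • P (j - k)) (m : ℤ) (n : ℕ) :
    R n * P m = P m * R n + P (m - 1) * R (n - 1) := by
  induction n using Nat.strong_induction_on with
  | _ n ih =>
  rcases Nat.eq_zero_or_pos n with rfl | hn
  · simp [hR.zero, hR.neg (-1) (by norm_num)]
  have hterm : ∀ l ∈ Icc 1 n, w l • (x l * R (n - l) * P m) =
      P m * (w l • (x l * R (n - l))) + P (m - 1) * (w l • (x l * R (n - 1 - l))) +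
        (-1 : K) ^ (l + 1) •
          (P (m - l) * R (n - l) + P (m - (l + 1 : ℕ)) * R (n - (l + 1 : ℕ))) := by
    intro l hl
    rw [mem_Icc] at hl
    have hRP : R (n - l) * P m = P m * R (n - l) + P (m - 1) * R (n - 1 - l) := by
      simpa [Nat.cast_sub hl.2, sub_right_comm] using ih (n - l) (by omega)
    have hm : m - (l + 1 : ℕ) = m - 1 - l := by push_cast; ring
    have hnl : (n : ℤ) - (l + 1 : ℕ) = n - 1 - l := by push_cast; ring
    rw [mul_assoc, hRP, ← hc l hl.1, hm, hnl, ← smul_smul, mul_add,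
      ← mul_assoc, ← mul_assoc, sub_eq_iff_eq_add'.1 (hxP l hl.1 m),
      sub_eq_iff_eq_add'.1 (hxP l hl.1 (m - 1))]
    simp only [add_mul, smul_mul_assoc, mul_assoc, smul_add, mul_smul_comm]
    abel
  refine smul_right_injective A (show (n : K) ≠ 0 by exact_mod_cast hn.ne') ?_
  calc (n : K) • (R n * P m)
      = ∑ l ∈ Icc 1 n, w l • (x l * R (n - l) * P m) := by
        rw [← smul_mul_assoc, hR.recursion n hn, sum_mul]
        exact sum_congr rfl fun l _ => smul_mul_assoc _ _ _
    _ = P m * (((n : ℤ) : K) • R n) + P (m - 1) * (((n - 1 : ℤ) : K) • R (n - 1)) +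
          P (m - 1) * R (n - 1) := by
        rw [sum_congr rfl hterm, sum_add_distrib, sum_add_distrib, ← mul_sum, ← mul_sum,
          hR.smul_eq_sum (N := n) le_rfl, hR.smul_eq_sum (N := n) (by omega),
          sum_Icc_neg_one_pow_smul_add (fun l : ℕ => P (m - l) * R (n - l)) n]
        simp [hR.neg (-1) (by norm_num)]
    _ = (n : K) • (P m * R n + P (m - 1) * R (n - 1)) := by
        rw [mul_smul_comm, mul_smul_comm, smul_add]
        push_cast
        rw [sub_smul, one_smul]
        abel

end IsExpCoeffs_s1

end ExpCoeffs

theorem heisenberg_QP_adjacent_nodes_general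
    {A : Type*} [Ring A] [Algebra (RatFunc ℚ) A]
    (b a : ℕ → A)
    (P Q : ℤ → A)
    (hP0 : P 0 = 1)
    (hPneg : ∀ k : ℤ, k < 0 → P k = 0)
    (hPrec : ∀ n : ℕ, 1 ≤ n →
      (n : RatFunc ℚ) • P n =
        ∑ m ∈ Finset.Icc 1 n, ((m : RatFunc ℚ) / qint m) • (b m * P ((n : ℤ) - m)))
    (hQ0 : Q 0 = 1)
    (hQneg : ∀ k : ℤ, k < 0 → Q k = 0)
    (hQrec : ∀ n : ℕ, 1 ≤ n →
      (n : RatFunc ℚ) • Q n =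
        ∑ m ∈ Finset.Icc 1 n, ((m : RatFunc ℚ) / qint m) • (a m * Q ((n : ℤ) - m)))
    (hcomm : ∀ m m' : ℕ, 1 ≤ m → 1 ≤ m' →
      a m * b m' - b m' * a m =
        if m = m' then
          (((-1 : RatFunc ℚ) ^ (m + 1) * qint m ^ 2 / (m : RatFunc ℚ)) • (1 : A))
        else 0)
    (m n : ℕ) :
    Q n * P m = P m * Q n + P ((m : ℤ) - 1) * Q ((n : ℤ) - 1) := by
  let w (l : ℕ) : RatFunc ℚ := l / qint l
  let s (k : ℕ) : RatFunc ℚ := (-1) ^ (k + 1) * qint k ^ 2 / k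
  have hP : IsExpCoeffs_s1 w b P := ⟨hP0, hPneg, hPrec⟩
  have hQ : IsExpCoeffs_s1 w a Q := ⟨hQ0, hQneg, hQrec⟩
  have hws (k : ℕ) (hk : 1 ≤ k) : w k * (w k * s k / k) = (-1) ^ (k + 1) := by
    have : qint k ≠ 0 := qint_ne_zero_s1 (by omega)
    have : (k : RatFunc ℚ) ≠ 0 := by exact_mod_cast (show k ≠ 0 by omega)
    simp only [w, s]
    field_simp
  exact hQ.mul_eq_add_of_commutator hws
    (fun k hk => hP.mul_sub_mul_eq_smul hk (hcomm k · hk)) m n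

/-- Lemma 1 (case `⟨i,j⟩ = -1`): `Q^{(n)} P^{(m)} = P^{(m)} Q^{(n)} + P^{(m-1)} Q^{(n-1)}`. -/
theorem heisenberg_QP_adjacent_nodes
    {A : Type*} [Ring A] [Algebra (RatFunc ℚ) A]
    (b a : ℕ → A)
    (hb : ∀ m m' : ℕ, Commute (b m) (b m'))
    (ha : ∀ m m' : ℕ, Commute (a m) (a m'))
    (P Q : ℤ → A)
    (hP0 : P 0 = 1)
    (hPneg : ∀ k : ℤ, k < 0 → P k = 0)
    (hPrec : ∀ n : ℕ, 1 ≤ n →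
      (n : RatFunc ℚ) • P n =
        ∑ m ∈ Finset.Icc 1 n, ((m : RatFunc ℚ) / qint m) • (b m * P ((n : ℤ) - m)))
    (hQ0 : Q 0 = 1)
    (hQneg : ∀ k : ℤ, k < 0 → Q k = 0)
    (hQrec : ∀ n : ℕ, 1 ≤ n →
      (n : RatFunc ℚ) • Q n =
        ∑ m ∈ Finset.Icc 1 n, ((m : RatFunc ℚ) / qint m) • (a m * Q ((n : ℤ) - m)))
    (hcomm : ∀ m m' : ℕ, 1 ≤ m → 1 ≤ m' →
      a m * b m' - b m' * a m =
        if m = m' then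
          (((-1 : RatFunc ℚ) ^ (m + 1) * qint m ^ 2 / (m : RatFunc ℚ)) • (1 : A))
        else 0)
    (m n : ℕ) :
    Q n * P m = P m * Q n + P ((m : ℤ) - 1) * Q ((n : ℤ) - 1) :=
  heisenberg_QP_adjacent_nodes_general b a P Q hP0 hPneg hPrec hQ0 hQneg hQrec hcomm m n
end

section
/- Let m, n ≥ 0. Then Q^{(1^m)}·P^{(n)} = P^{(n)}·Q^{(1^m)} + [2]·P^{(n−1)}·Q^{(1^{m−1})} + P^{(n−2)}·Q^{(1^{m−2})} in A. (This is the same-node case i = j of the additional mixed relations stated after Lemma 1.) -/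
/-!
Both `P` and `Q^{(1^·)}` are given by Newton-type recursions `n R_n = ∑ c_k x_k R_{n-k}`.
Feeding the Heisenberg relation through the recursion of `P` gives
`[a_k, P^{(n)}] = ([2k]/k) P^{(n-k)}`. Expanding `Q^{(1^m)}` by its recursion, moving each `a_k`
to the right of `P^{(n)}` and using the claim for `m - k`, strong induction on `m` reduces the
relation to the scalar identity
`∑_k (-1)^{k+1} (q^k + q^{-k}) (u_k + [2] u_{k+1} + u_{k+2}) = [2] u_1 + 2 u_2`
for sequences `u` vanishing beyond `m`. It holds because `1 + [2] z + z² = (1 + q z)(1 + q⁻¹ z)`,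
each linear factor contributing a telescoping sum. In generating-function terms,
`Q(w) P(z) = P(z) Q(w) (1 + q w z)(1 + q⁻¹ w z)`.
-/

open Finset

section Telescoping

variable {K M : Type*} [Field K] [AddCommGroup M] [Module K M]

theorem sum_Icc_sub_succ (F : ℕ → M) (m : ℕ) :
    ∑ k ∈ Icc 1 m, (F k - F (k + 1)) = F 1 - F (m + 1) := by
  rw [← Ico_add_one_right_eq_Icc, ← neg_sub, ← sum_Ico_sub _ (by omega : 1 ≤ m + 1)]
  simp only [neg_sub, ← sum_neg_distrib]

theorem sum_neg_pow_smul_telescope (α β : K) (u : ℕ → M) (m : ℕ) :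
    ∑ k ∈ Icc 1 m, (-α) ^ k • (u k + (α + β) • u (k + 1) + (α * β) • u (k + 2)) =
      (-α) • (u 1 + β • u 2) - (-α) ^ (m + 1) • (u (m + 1) + β • u (m + 2)) := by
  have h := sum_Icc_sub_succ (fun k ↦ (-α) ^ k • (u k + β • u (k + 1))) m
  simp only [pow_one] at h
  rw [h.symm]
  refine sum_congr rfl fun k _ ↦ ?_
  rw [pow_succ]
  module

theorem sum_neg_one_pow_powerSum_smul (α β : K) (u : ℕ → M) (m : ℕ) (hu : ∀ j, m < j → u j = 0) :
    ∑ k ∈ Icc 1 m, ((-1) ^ (k + 1) * (α ^ k + β ^ k)) •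
        (u k + (α + β) • u (k + 1) + (α * β) • u (k + 2)) =
      (α + β) • u 1 + (2 * α * β) • u 2 := by
  have hcoef (k : ℕ) : (-1 : K) ^ (k + 1) * (α ^ k + β ^ k) = -((-α) ^ k + (-β) ^ k) := by
    rw [neg_pow α, neg_pow β, pow_succ]; ring
  have hα := sum_neg_pow_smul_telescope α β u m
  have hβ := sum_neg_pow_smul_telescope β α u m
  rw [add_comm β, mul_comm β] at hβ
  rw [sum_congr rfl fun k _ ↦ by rw [hcoef, neg_smul, add_smul], sum_neg_distrib,
    sum_add_distrib, hα, hβ, hu (m + 1) (by omega), hu (m + 2) (by omega)]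
  module

end Telescoping

section Newton

variable {K A : Type*} [Field K] [Ring A] [Algebra K A]

theorem mul_mul_eq_of_commutator {y : A} {S : ℤ → A} {lam : K} {k : ℤ}
    (hS : ∀ n, y * S n - S n * y = lam • S (n - k)) (n : ℤ) (z : A) :
    y * (S n * z) = S n * (y * z) + lam • (S (n - k) * z) := by
  rw [← mul_assoc, sub_eq_iff_eq_add'.mp (hS n), add_mul, mul_assoc, smul_mul_assoc]

theorem mul_mul_eq_of_commutator_of_eq {y : A} {R S : ℤ → A} {lam : K} {k : ℤ}
    (hS : ∀ n, y * S n - S n * y = lam • S (n - k)) {t s : K} {l n : ℤ}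
    (h : R l * S n = S n * R l + t • (S (n - 1) * R (l - 1)) + s • (S (n - 2) * R (l - 2))) :
    y * (R l * S n) =
      S n * (y * R l) + t • (S (n - 1) * (y * R (l - 1))) + s • (S (n - 2) * (y * R (l - 2))) +
        lam • (S (n - k) * R l + t • (S (n - 1 - k) * R (l - 1)) +
          s • (S (n - 2 - k) * R (l - 2))) := by
  rw [h, mul_add, mul_add, mul_smul_comm, mul_smul_comm, mul_mul_eq_of_commutator hS,
    mul_mul_eq_of_commutator hS, mul_mul_eq_of_commutator hS]
  module

/-- When the `x k` commute, the recursion encodes `∑ R n z ^ n = exp (∑ (c k / k) • x k z ^ k)`. -/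
structure IsNewtonSeq (c : ℕ → K) (x : ℕ → A) (R : ℤ → A) : Prop where
  eq_zero_of_neg : ∀ k : ℤ, k < 0 → R k = 0
  natCast_smul : ∀ n : ℕ, 1 ≤ n → (n : K) • R n = ∑ k ∈ Icc 1 n, c k • (x k * R ((n : ℤ) - k))

namespace IsNewtonSeq

variable {c : ℕ → K} {x : ℕ → A} {R : ℤ → A}

theorem sum_smul_mul (hR : IsNewtonSeq c x R) {m : ℕ} {M : ℤ} (hM : M ≤ m) :
    ∑ k ∈ Icc 1 m, c k • (x k * R (M - k)) = (M : K) • R M := by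
  rcases lt_or_ge M 0 with hM0 | hM0
  · rw [hR.eq_zero_of_neg M hM0, smul_zero]
    refine sum_eq_zero fun k hk ↦ ?_
    rw [hR.eq_zero_of_neg _ (by simp at hk; omega), mul_zero, smul_zero]
  lift M to ℕ using hM0
  rw [← sum_subset (Icc_subset_Icc_right (by omega : M ≤ m))]
  · rcases Nat.eq_zero_or_pos M with rfl | hM1
    · simp
    · rw [Int.cast_natCast, hR.natCast_smul M hM1]
  · intro k hk hkM
    simp only [mem_Icc] at hk hkM
    rw [hR.eq_zero_of_neg _ (by omega), mul_zero, smul_zero]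

theorem commutator_natCast_eq_of_lt [CharZero K] (hR : IsNewtonSeq c x R) {y : A} {g lam : K}
    {k : ℕ} (hk : 1 ≤ k) (hy : ∀ j : ℕ, 1 ≤ j → y * x j - x j * y = if k = j then g • 1 else 0)
    (hlam : lam * k = c k * g) {ν : ℕ} (hν : 1 ≤ ν)
    (IH : ∀ n : ℤ, n < ν → y * R n - R n * y = lam • R (n - k)) :
    y * R ν - R ν * y = lam • R (ν - k) := by
  have hterm (j : ℕ) (hj : j ∈ Icc 1 ν) :
      y * (x j * R (ν - j)) - x j * R (ν - j) * y =
        (if k = j then g • R (ν - j) else 0) + lam • (x j * R ((ν - k : ℤ) - j)) := by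
    simp only [mem_Icc] at hj
    have hsplit : y * (x j * R (ν - j)) - x j * R (ν - j) * y =
        (y * x j - x j * y) * R (ν - j) + x j * (y * R (ν - j) - R (ν - j) * y) := by
      noncomm_ring
    rw [hsplit, hy j hj.1, IH _ (by omega), mul_smul_comm, sub_right_comm]
    split_ifs <;> simp
  have hdiag : ∑ j ∈ Icc 1 ν, c j • (if k = j then g • R (ν - j) else 0) =
      (c k * g) • R (ν - k) := by
    simp_rw [smul_ite, smul_zero, sum_ite_eq, mem_Icc, smul_smul]
    split_ifs with hkν
    · rfl
    · rw [hR.eq_zero_of_neg _ (by omega), smul_zero]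
  apply smul_right_injective A (Nat.cast_ne_zero.mpr (by omega) : (ν : K) ≠ 0)
  simp only
  rw [smul_sub, ← mul_smul_comm, ← smul_mul_assoc, hR.natCast_smul ν hν, mul_sum, sum_mul,
    ← sum_sub_distrib]
  simp_rw [mul_smul_comm, smul_mul_assoc, ← smul_sub]
  rw [sum_congr rfl fun j hj ↦ by rw [hterm j hj]]
  simp only [smul_add, sum_add_distrib, hdiag, smul_comm (c _) lam, ← smul_sum,
    hR.sum_smul_mul (by omega : (ν : ℤ) - k ≤ ν), ← hlam]
  push_cast
  module

theorem commutator_eq [CharZero K] (hR : IsNewtonSeq c x R) (hR0 : R 0 = 1) {y : A} {g : K}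
    {k : ℕ} (hk : 1 ≤ k)
    (hy : ∀ j : ℕ, 1 ≤ j → y * x j - x j * y = if k = j then g • 1 else 0) (n : ℤ) :
    y * R n - R n * y = (c k * g / k) • R (n - k) := by
  have hlam : c k * g / k * k = c k * g := div_mul_cancel₀ _ (Nat.cast_ne_zero.mpr (by omega))
  suffices h : ∀ N : ℕ, ∀ n : ℤ, n ≤ N → y * R n - R n * y = (c k * g / k) • R (n - k) from
    h _ n n.self_le_toNat
  intro N
  induction N with
  | zero =>
    intro n hn
    rcases hn.lt_or_eq with hn | rfl
    · simp [hR.eq_zero_of_neg n hn, hR.eq_zero_of_neg (n - k) (by omega)]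
    · simp [hR0, hR.eq_zero_of_neg (-k) (by omega)]
  | succ N IH =>
    intro n hn
    rcases (show n ≤ N ∨ n = (N + 1 : ℕ) by omega) with hn | rfl
    · exact IH n hn
    · exact hR.commutator_natCast_eq_of_lt hk hy hlam N.succ_pos fun n hn ↦ IH n (by omega)

theorem mul_eq_of_commutator [CharZero K] (hR : IsNewtonSeq c x R) (hR0 : R 0 = 1)
    {S : ℤ → A} {lam : ℕ → K}
    (hS : ∀ k : ℕ, 1 ≤ k → ∀ n : ℤ, x k * S n - S n * x k = lam k • S (n - k))
    {α β : K} (hw : ∀ k : ℕ, 1 ≤ k → c k * lam k = (-1) ^ (k + 1) * (α ^ k + β ^ k))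
    (m : ℕ) (n : ℤ) :
    R m * S n = S n * R m + (α + β) • (S (n - 1) * R (m - 1)) +
      (α * β) • (S (n - 2) * R (m - 2)) := by
  induction m using Nat.strong_induction_on generalizing n with
  | _ m IH =>
  rcases Nat.eq_zero_or_pos m with rfl | hm
  · rw [Nat.cast_zero, hR0, hR.eq_zero_of_neg _ (by omega), hR.eq_zero_of_neg _ (by omega)]
    simp
  set u : ℕ → A := fun j ↦ S (n - j) * R (m - j)
  have hu_eq_zero (j : ℕ) (hj : m < j) : u j = 0 := by
    simp only [u, hR.eq_zero_of_neg _ (by omega : (m : ℤ) - j < 0), mul_zero]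
  have hterm (k : ℕ) (hk : k ∈ Icc 1 m) :
      c k • (x k * (R (m - k) * S n)) =
        S n * (c k • (x k * R (m - k))) +
          (α + β) • (S (n - 1) * (c k • (x k * R ((m - 1 : ℤ) - k)))) +
          (α * β) • (S (n - 2) * (c k • (x k * R ((m - 2 : ℤ) - k)))) +
          c k • lam k • (u k + (α + β) • u (k + 1) + (α * β) • u (k + 2)) := by
    simp only [mem_Icc] at hk
    have hIH := IH (m - k) (by omega) n
    rw [Nat.cast_sub hk.2] at hIH
    rw [mul_mul_eq_of_commutator_of_eq (hS k hk.1) hIH]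
    simp only [u, sub_right_comm _ (k : ℤ), Nat.cast_add, Nat.cast_one, Nat.cast_ofNat, ← sub_sub,
      mul_smul_comm]
    module
  have hpowerSum : ∑ k ∈ Icc 1 m, c k • lam k • (u k + (α + β) • u (k + 1) + (α * β) • u (k + 2)) =
      (α + β) • u 1 + (2 * α * β) • u 2 := by
    rw [← sum_neg_one_pow_powerSum_smul α β u m hu_eq_zero]
    refine sum_congr rfl fun k hk ↦ ?_
    rw [smul_smul, hw k (mem_Icc.mp hk).1]
  apply smul_right_injective A (Nat.cast_ne_zero.mpr hm.ne' : (m : K) ≠ 0)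
  simp only
  rw [← smul_mul_assoc, hR.natCast_smul m hm, sum_mul]
  simp_rw [smul_mul_assoc, mul_assoc]
  rw [sum_congr rfl hterm]
  simp only [sum_add_distrib, ← mul_sum, ← smul_sum, hpowerSum]
  rw [hR.sum_smul_mul le_rfl, hR.sum_smul_mul (by omega), hR.sum_smul_mul (by omega)]
  simp only [u, mul_smul_comm]
  push_cast
  module

end IsNewtonSeq

end Newton

namespace RatFunc

variable {K : Type*} [Field K]

theorem X_pow_ne_one {k : ℕ} (hk : k ≠ 0) : (X : RatFunc K) ^ k ≠ 1 := fun h ↦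
  transcendental_X.pow (Nat.pos_of_ne_zero hk) (h ▸ isAlgebraic_one)

theorem X_pow_sub_inv_ne_zero {k : ℕ} (hk : k ≠ 0) : (X : RatFunc K) ^ k - (X ^ k)⁻¹ ≠ 0 := by
  intro h
  apply X_pow_ne_one (K := K) (mul_ne_zero two_ne_zero hk)
  rw [pow_mul', sq]
  nth_rewrite 2 [sub_eq_zero.mp h]
  exact mul_inv_cancel₀ (pow_ne_zero _ X_ne_zero)

end RatFunc

open RatFunc

theorem qint_natCast (k : ℕ) : qint k = (X ^ k - (X ^ k)⁻¹) / (X - X⁻¹) := by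
  simp [qint, zpow_neg]

theorem qint_natCast_ne_zero {k : ℕ} (hk : k ≠ 0) : qint k ≠ 0 := by
  rw [qint_natCast]
  exact div_ne_zero (X_pow_sub_inv_ne_zero hk) (by simpa using X_pow_sub_inv_ne_zero one_ne_zero)

theorem qint_two_mul (k : ℕ) : qint (2 * k) = qint k * (X ^ k + X⁻¹ ^ k) := by
  rw [show 2 * (k : ℤ) = (2 * k : ℕ) by push_cast; rfl, qint_natCast, qint_natCast,
    div_mul_eq_mul_div, pow_mul']
  ring

theorem qint_two : qint 2 = X + X⁻¹ := by
  have h := qint_two_mul 1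
  rw [qint_natCast 1, pow_one, pow_one, div_self (by simpa using X_pow_sub_inv_ne_zero one_ne_zero),
    one_mul] at h
  simpa using h

theorem heisenberg_Q1P_same_node_general
    {A : Type*} [Ring A] [Algebra (RatFunc ℚ) A]
    (b a : ℕ → A)
    (P Q1 : ℤ → A)
    (hP0 : P 0 = 1)
    (hPneg : ∀ k : ℤ, k < 0 → P k = 0)
    (hPrec : ∀ n : ℕ, 1 ≤ n →
      (n : RatFunc ℚ) • P n =
        ∑ m ∈ Finset.Icc 1 n, ((m : RatFunc ℚ) / qint m) • (b m * P ((n : ℤ) - m)))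
    (hQ10 : Q1 0 = 1)
    (hQ1neg : ∀ k : ℤ, k < 0 → Q1 k = 0)
    (hQ1rec : ∀ n : ℕ, 1 ≤ n →
      (n : RatFunc ℚ) • Q1 n =
        ∑ m ∈ Finset.Icc 1 n,
          ((-1 : RatFunc ℚ) ^ (m + 1) * (m : RatFunc ℚ) / qint m) • (a m * Q1 ((n : ℤ) - m)))
    (hcomm : ∀ m m' : ℕ, 1 ≤ m → 1 ≤ m' →
      a m * b m' - b m' * a m =
        if m = m' then (qint (2 * m) * qint m / (m : RatFunc ℚ)) • (1 : A) else 0)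
    (m n : ℕ) :
    Q1 m * P n =
      P n * Q1 m + qint 2 • (P ((n : ℤ) - 1) * Q1 ((m : ℤ) - 1)) +
        P ((n : ℤ) - 2) * Q1 ((m : ℤ) - 2) := by
  have hP : IsNewtonSeq (fun k ↦ (k : RatFunc ℚ) / qint k) b P := ⟨hPneg, hPrec⟩
  have hQ1 : IsNewtonSeq (fun k ↦ (-1) ^ (k + 1) * (k : RatFunc ℚ) / qint k) a Q1 :=
    ⟨hQ1neg, hQ1rec⟩
  have hcoef (k : ℕ) (hk : 1 ≤ k) :
      (-1) ^ (k + 1) * (k : RatFunc ℚ) / qint k *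
          ((k : RatFunc ℚ) / qint k * (qint (2 * k) * qint k / (k : RatFunc ℚ)) / (k : RatFunc ℚ)) =
        (-1) ^ (k + 1) * (X ^ k + X⁻¹ ^ k) := by
    have hk0 : (k : RatFunc ℚ) ≠ 0 := Nat.cast_ne_zero.mpr (by omega)
    have hqk := qint_natCast_ne_zero (k := k) (by omega)
    rw [qint_two_mul]
    field_simp
  have h := hQ1.mul_eq_of_commutator hQ10
    (fun k hk ↦ hP.commutator_eq hP0 hk (hcomm k · hk)) hcoef m n
  rwa [← qint_two, mul_inv_cancel₀ X_ne_zero, one_smul] at h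

/-- The same-node mixed relation:
`Q^{(1^m)} P^{(n)} = P^{(n)} Q^{(1^m)} + [2] P^{(n-1)} Q^{(1^{m-1})} + P^{(n-2)} Q^{(1^{m-2})}`. -/
theorem heisenberg_Q1P_same_node
    {A : Type*} [Ring A] [Algebra (RatFunc ℚ) A]
    (b a : ℕ → A)
    (hb : ∀ m m' : ℕ, Commute (b m) (b m'))
    (ha : ∀ m m' : ℕ, Commute (a m) (a m'))
    (P Q1 : ℤ → A)
    (hP0 : P 0 = 1)
    (hPneg : ∀ k : ℤ, k < 0 → P k = 0)
    (hPrec : ∀ n : ℕ, 1 ≤ n →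
      (n : RatFunc ℚ) • P n =
        ∑ m ∈ Finset.Icc 1 n, ((m : RatFunc ℚ) / qint m) • (b m * P ((n : ℤ) - m)))
    (hQ10 : Q1 0 = 1)
    (hQ1neg : ∀ k : ℤ, k < 0 → Q1 k = 0)
    (hQ1rec : ∀ n : ℕ, 1 ≤ n →
      (n : RatFunc ℚ) • Q1 n =
        ∑ m ∈ Finset.Icc 1 n,
          ((-1 : RatFunc ℚ) ^ (m + 1) * (m : RatFunc ℚ) / qint m) • (a m * Q1 ((n : ℤ) - m)))
    (hcomm : ∀ m m' : ℕ, 1 ≤ m → 1 ≤ m' →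
      a m * b m' - b m' * a m =
        if m = m' then (qint (2 * m) * qint m / (m : RatFunc ℚ)) • (1 : A) else 0)
    (m n : ℕ) :
    Q1 m * P n =
      P n * Q1 m + qint 2 • (P ((n : ℤ) - 1) * Q1 ((m : ℤ) - 1)) +
        P ((n : ℤ) - 2) * Q1 ((m : ℤ) - 2) :=
  heisenberg_Q1P_same_node_general b a P Q1 hP0 hPneg hPrec hQ10 hQ1neg hQ1rec hcomm m n
end

section
/- (Gaussian elimination, Lemma 6.2.) Let C be an additive category and let X• be a cochain complex in C. Fix n ∈ ℤ and suppose X^n = X ⊕ Y and X^{n+1} = Z ⊕ W are biproducts, write u := d^{n−1} : X^{n−1} → X ⊕ Y and v := d^{n+1} : Z ⊕ W → X^{n+2}, and write the differential d^n : X ⊕ Y → Z ⊕ W in matrix form with components A : X → Z, B : Y → Z, C' : X → W, D : Y → W. If D is an isomorphism, then X• is homotopy equivalent to the cochain complex X'• that coincides with X• in every degree other than n and n+1, has X'^n = X and X'^{n+1} = Z, and has differentials d'^{n−1} = π_X ∘ u, d'^n = A − B ∘ D^{−1} ∘ C', d'^{n+1} = v ∘ ι_Z, with all other differentials unchanged (here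 π_X and ι_Z are the biproduct projection and inclusion). -/
/-!
Write `d^n : X ⊕ Y → Z ⊕ W` as the matrix `(A B; C' D)` with `D` invertible and put
`h := -ι_Y D⁻¹ π_W : X^{n+1} → X^n`. Then `1 + h d^n` on `X^n` and `1 + d^n h` on `X^{n+1}` are
idempotents, split by `X` (through `π_X` and `(1, -D⁻¹ C')`) and by `Z` (through `(1, -B D⁻¹)`
and `ι_Z`). Whenever `1 + d h + h d` splits degreewise as `ι ∘ π` with `π ∘ ι = 1`, the split-off
objects form a complex with differential `π d ι`, and `π` and `ι` are mutually inverse homotopy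
equivalences, with homotopy `h`. Here `π d^n ι` is the Schur complement `A - B D⁻¹ C'`.
-/

open CategoryTheory Limits

section

variable {C : Type*} [Category C] [Preadditive C]

namespace HomologicalComplex

variable {ι : Type*} {c : ComplexShape ι} (K : HomologicalComplex C c)

lemma d_comp_dNext (h : ∀ i j, K.X i ⟶ K.X j) (i j : ι) : K.d i j ≫ dNext j h = 0 := by
  simp [dNext]

lemma prevD_comp_d (h : ∀ i j, K.X i ⟶ K.X j) (i j : ι) : prevD i h ≫ K.d i j = 0 := by
  simp [prevD]

lemma dNext_comp_d (h : ∀ i j, K.X i ⟶ K.X j) (i j : ι) :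
    dNext i h ≫ K.d i j = K.d i j ≫ prevD j h := by
  by_cases hij : c.Rel i j
  · simp [dNext_eq h hij, prevD_eq h hij]
  · simp [K.shape i j hij]

variable {T : ι → C} (f : ∀ i, K.X i ⟶ T i) (g : ∀ i, T i ⟶ K.X i) (h : ∀ i j, K.X i ⟶ K.X j)

abbrev retract (fg : ∀ i, f i ≫ g i = dNext i h + prevD i h + 𝟙 _) : HomologicalComplex C c where
  X := T
  d i j := g i ≫ K.d i j ≫ f j
  shape i j hij := by rw [K.shape i j hij, zero_comp, comp_zero]
  d_comp_d' i j k _ _ := by simp [reassoc_of% fg j]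

variable {h}

lemma d_comp_prevD_comp_eq_zero (gf : ∀ i, g i ≫ f i = 𝟙 _)
    (fg : ∀ i, f i ≫ g i = dNext i h + prevD i h + 𝟙 _) (i j : ι) :
    K.d i j ≫ prevD j h ≫ f j = 0 := by
  have hprev : prevD j h = f j ≫ g j - dNext j h - 𝟙 _ := by rw [fg j]; abel
  simp [hprev, gf j]

lemma comp_dNext_comp_d_eq_zero (gf : ∀ i, g i ≫ f i = 𝟙 _)
    (fg : ∀ i, f i ≫ g i = dNext i h + prevD i h + 𝟙 _) (i j : ι) :
    g i ≫ dNext i h ≫ K.d i j = 0 := by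
  have hnext : dNext i h = f i ≫ g i - prevD i h - 𝟙 _ := by rw [fg i]; abel
  simp [hnext, reassoc_of% gf i]

def retractπ (gf : ∀ i, g i ≫ f i = 𝟙 _)
    (fg : ∀ i, f i ≫ g i = dNext i h + prevD i h + 𝟙 _) : K ⟶ K.retract f g h fg where
  f := f
  comm' i j _ := by
    change f i ≫ g i ≫ K.d i j ≫ f j = K.d i j ≫ f j
    rw [reassoc_of% fg i]
    simp only [Preadditive.add_comp, Category.id_comp, reassoc_of% dNext_comp_d,
      d_comp_prevD_comp_eq_zero K f g gf fg, reassoc_of% prevD_comp_d, zero_comp, zero_add]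

def retractι (gf : ∀ i, g i ≫ f i = 𝟙 _)
    (fg : ∀ i, f i ≫ g i = dNext i h + prevD i h + 𝟙 _) : K.retract f g h fg ⟶ K where
  f := g
  comm' i j _ := by
    change g i ≫ K.d i j = (g i ≫ K.d i j ≫ f j) ≫ g j
    rw [Category.assoc, Category.assoc, fg j]
    simp only [Preadditive.comp_add, Category.comp_id, d_comp_dNext, ← dNext_comp_d,
      comp_dNext_comp_d_eq_zero K f g gf fg, zero_add]

def homotopyEquivRetract (gf : ∀ i, g i ≫ f i = 𝟙 _)
    (fg : ∀ i, f i ≫ g i = dNext i h + prevD i h + 𝟙 _)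
    (zero : ∀ i j, ¬ c.Rel j i → h i j = 0) : HomotopyEquiv K (K.retract f g h fg) where
  hom := K.retractπ f g gf fg
  inv := K.retractι f g gf fg
  homotopyHomInvId := { hom := h, zero := zero, comm := fg }
  homotopyInvHomId := Homotopy.ofEq (by ext i; exact gf i)

end HomologicalComplex

structure GaussianEliminationData {M N : C} (δ : M ⟶ N) (P Q : C) where
  π₀ : M ⟶ P
  ι₀ : P ⟶ M
  π₁ : N ⟶ Q
  ι₁ : Q ⟶ N
  h : N ⟶ M
  ι₀_π₀ : ι₀ ≫ π₀ = 𝟙 P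
  ι₁_π₁ : ι₁ ≫ π₁ = 𝟙 Q
  π₀_ι₀ : π₀ ≫ ι₀ = δ ≫ h + 𝟙 M
  π₁_ι₁ : π₁ ≫ ι₁ = h ≫ δ + 𝟙 N

namespace GaussianEliminationData

section

variable {X Y Z W : C} [HasBinaryBiproduct X Y] [HasBinaryBiproduct Z W] (d : X ⊞ Y ⟶ Z ⊞ W)
  [IsIso (biprod.inr ≫ d ≫ biprod.snd)]

lemma inr_d_snd_comp_inv : biprod.inr ≫ d ≫ biprod.snd ≫ inv (biprod.inr ≫ d ≫ biprod.snd) = 𝟙 Y := by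
  simpa only [Category.assoc] using IsIso.hom_inv_id (biprod.inr ≫ d ≫ biprod.snd)

@[simps]
noncomputable def ofBiprod : GaussianEliminationData d X Z where
  π₀ := biprod.fst
  ι₀ := biprod.lift (𝟙 X) (-((biprod.inl ≫ d ≫ biprod.snd) ≫ inv (biprod.inr ≫ d ≫ biprod.snd)))
  π₁ := biprod.desc (𝟙 Z) (-(inv (biprod.inr ≫ d ≫ biprod.snd) ≫ biprod.inr ≫ d ≫ biprod.fst))
  ι₁ := biprod.inl
  h := -(biprod.snd ≫ inv (biprod.inr ≫ d ≫ biprod.snd) ≫ biprod.inr)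
  ι₀_π₀ := by simp
  ι₁_π₁ := by simp
  π₀_ι₀ := by ext <;> simp [reassoc_of% inr_d_snd_comp_inv d]
  π₁_ι₁ := by ext <;> simp

lemma ofBiprod_reduced :
    (ofBiprod d).ι₀ ≫ d ≫ (ofBiprod d).π₁ =
      biprod.inl ≫ d ≫ biprod.fst -
        (biprod.inl ≫ d ≫ biprod.snd) ≫ inv (biprod.inr ≫ d ≫ biprod.snd) ≫
          (biprod.inr ≫ d ≫ biprod.fst) := by
  simp [biprod.lift_eq, biprod.desc_eq, reassoc_of% inr_d_snd_comp_inv d, sub_eq_add_neg]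

end

@[simps]
def transfer {M N M' N' : C} {δ : M ⟶ N} {P Q : C} (E : GaussianEliminationData δ P Q)
    (eM : M' ≅ M) (eN : N' ≅ N) (δ' : M' ⟶ N') (w : δ' ≫ eN.hom = eM.hom ≫ δ) :
    GaussianEliminationData δ' P Q where
  π₀ := eM.hom ≫ E.π₀
  ι₀ := E.ι₀ ≫ eM.inv
  π₁ := eN.hom ≫ E.π₁
  ι₁ := E.ι₁ ≫ eN.inv
  h := eN.hom ≫ E.h ≫ eM.inv
  ι₀_π₀ := by simp [E.ι₀_π₀]
  ι₁_π₁ := by simp [E.ι₁_π₁]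
  π₀_ι₀ := by simp [reassoc_of% E.π₀_ι₀, reassoc_of% w]
  π₁_ι₁ := by
    have w' : eM.inv ≫ δ' = δ ≫ eN.inv := by rw [Iso.inv_comp_eq, reassoc_of% w.symm]; simp
    simp [reassoc_of% E.π₁_ι₁, w']

lemma transfer_reduced {M N M' N' : C} {δ : M ⟶ N} {P Q : C} (E : GaussianEliminationData δ P Q)
    (eM : M' ≅ M) (eN : N' ≅ N) (δ' : M' ⟶ N') (w : δ' ≫ eN.hom = eM.hom ≫ δ) :
    (E.transfer eM eN δ' w).ι₀ ≫ δ' ≫ (E.transfer eM eN δ' w).π₁ = E.ι₀ ≫ δ ≫ E.π₁ := by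
  simp [reassoc_of% w]

variable {ι : Type*} [DecidableEq ι] {c : ComplexShape ι} {K : HomologicalComplex C c}
  {n n' : ι} {P Q : C} (E : GaussianEliminationData (K.d n n') P Q)

abbrev reducedX (K : HomologicalComplex C c) (n n' : ι) (P Q : C) : ι → C :=
  Function.update (Function.update K.X n' Q) n P

def proj (j : ι) : K.X j ⟶ reducedX K n n' P Q j :=
  if hj : j = n then eqToHom (by rw [hj]) ≫ E.π₀ ≫ eqToHom (by subst hj; simp)
  else if hj' : j = n' then eqToHom (by rw [hj']) ≫ E.π₁ ≫ eqToHom (by subst hj'; simp [hj])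
  else eqToHom (by simp [hj, hj'])

def incl (j : ι) : reducedX K n n' P Q j ⟶ K.X j :=
  if hj : j = n then eqToHom (by subst hj; simp) ≫ E.ι₀ ≫ eqToHom (by rw [hj])
  else if hj' : j = n' then eqToHom (by subst hj'; simp [hj]) ≫ E.ι₁ ≫ eqToHom (by rw [hj'])
  else eqToHom (by simp [hj, hj'])

def homotopy (j k : ι) : K.X j ⟶ K.X k :=
  if hjk : j = n' ∧ k = n then eqToHom (by rw [hjk.1]) ≫ E.h ≫ eqToHom (by rw [hjk.2]) else 0

lemma proj_source : E.proj n = E.π₀ ≫ eqToHom (by simp) := by simp [proj]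

lemma proj_target (hne : n ≠ n') : E.proj n' = E.π₁ ≫ eqToHom (by simp [hne.symm]) := by
  simp [proj, hne.symm]

lemma proj_of_ne {j : ι} (hj : j ≠ n) (hj' : j ≠ n') : E.proj j = eqToHom (by simp [hj, hj']) := by
  simp [proj, hj, hj']

lemma incl_source : E.incl n = eqToHom (by simp) ≫ E.ι₀ := by simp [incl]

lemma incl_target (hne : n ≠ n') : E.incl n' = eqToHom (by simp [hne.symm]) ≫ E.ι₁ := by
  simp [incl, hne.symm]

lemma incl_of_ne {j : ι} (hj : j ≠ n) (hj' : j ≠ n') : E.incl j = eqToHom (by simp [hj, hj']) := by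
  simp [incl, hj, hj']

lemma homotopy_target_source : E.homotopy n' n = E.h := by simp [homotopy]

lemma homotopy_of_ne_left {j : ι} (hj : j ≠ n') (k : ι) : E.homotopy j k = 0 := by
  simp [homotopy, hj]

lemma homotopy_of_ne_right (j : ι) {k : ι} (hk : k ≠ n) : E.homotopy j k = 0 := by
  simp [homotopy, hk]

lemma incl_proj (hne : n ≠ n') (j : ι) : E.incl j ≫ E.proj j = 𝟙 _ := by
  by_cases hj : j = n
  · subst hj; simp [incl_source, proj_source, reassoc_of% E.ι₀_π₀]
  by_cases hj' : j = n'
  · subst hj'; simp [incl_target E hne, proj_target E hne, reassoc_of% E.ι₁_π₁]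
  simp [incl_of_ne E hj hj', proj_of_ne E hj hj']

lemma proj_incl (hrel : c.Rel n n') (hne : n ≠ n') (j : ι) :
    E.proj j ≫ E.incl j = dNext j E.homotopy + prevD j E.homotopy + 𝟙 _ := by
  by_cases hj : j = n
  · subst hj
    rw [dNext_eq _ hrel, prevD_eq_toPrev_dTo]
    simp [incl_source, proj_source, E.π₀_ι₀, homotopy_target_source, toPrev, homotopy_of_ne_left E hne]
  by_cases hj' : j = n'
  · subst hj'
    rw [prevD_eq _ hrel, dNext_eq_dFrom_fromNext]
    simp [incl_target E hne, proj_target E hne, E.π₁_ι₁, homotopy_target_source, fromNext,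
      homotopy_of_ne_right E _ hne.symm]
  rw [dNext_eq_dFrom_fromNext, prevD_eq_toPrev_dTo]
  simp [incl_of_ne E hj hj', proj_of_ne E hj hj', fromNext, toPrev, homotopy_of_ne_left E hj',
    homotopy_of_ne_right E _ hj]

lemma homotopy_eq_zero (hrel : c.Rel n n') (j k : ι) (hjk : ¬ c.Rel k j) : E.homotopy j k = 0 := by
  by_cases hj : j = n'
  · exact E.homotopy_of_ne_right j (by rintro rfl; exact hjk (hj ▸ hrel))
  · exact E.homotopy_of_ne_left hj k

abbrev reducedComplex (hrel : c.Rel n n') (hne : n ≠ n') : HomologicalComplex C c :=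
  K.retract E.proj E.incl E.homotopy (E.proj_incl hrel hne)

def homotopyEquivReducedComplex (hrel : c.Rel n n') (hne : n ≠ n') :
    HomotopyEquiv K (E.reducedComplex hrel hne) :=
  K.homotopyEquivRetract E.proj E.incl (E.incl_proj hne) (E.proj_incl hrel hne)
    (E.homotopy_eq_zero hrel)

end GaussianEliminationData

end

/-- Gaussian elimination (Lemma 6.2): if `X^n ≅ X ⊞ Y`, `X^{n+1} ≅ Z ⊞ W` and the component
`D : Y ⟶ W` of the differential is an isomorphism, then the complex is homotopy equivalent to
the complex with `X` and `Z` in degrees `n`, `n+1`, differential `A - B ∘ D⁻¹ ∘ C'` between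
them, differentials `π_X ∘ u` and `v ∘ ι_Z` into and out of these degrees, and all other
terms and differentials unchanged. -/
theorem gaussian_elimination
    {C : Type*} [Category C] [Preadditive C] [HasBinaryBiproducts C]
    (K : CochainComplex C ℤ) (n : ℤ)
    (Xo Yo Zo Wo : C)
    (en : K.X n ≅ Xo ⊞ Yo) (en1 : K.X (n + 1) ≅ Zo ⊞ Wo)
    [IsIso (biprod.inr ≫ en.inv ≫ K.d n (n + 1) ≫ en1.hom ≫ biprod.snd)] :
    ∃ (K' : CochainComplex C ℤ)
      (eo : ∀ i : ℤ, i ≠ n → i ≠ n + 1 → (K'.X i ≅ K.X i))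
      (e0 : K'.X n ≅ Xo) (e1 : K'.X (n + 1) ≅ Zo),
      Nonempty (HomotopyEquiv K K') ∧
      (∀ (i : ℤ) (h1 : i ≠ n) (h2 : i ≠ n + 1) (h3 : i + 1 ≠ n) (h4 : i + 1 ≠ n + 1),
        K'.d i (i + 1) ≫ (eo (i + 1) h3 h4).hom = (eo i h1 h2).hom ≫ K.d i (i + 1)) ∧
      (K'.d (n - 1) n ≫ e0.hom =
        (eo (n - 1) (by omega) (by omega)).hom ≫ K.d (n - 1) n ≫ en.hom ≫ biprod.fst) ∧
      (K'.d n (n + 1) ≫ e1.hom =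
        e0.hom ≫
          (biprod.inl ≫ en.inv ≫ K.d n (n + 1) ≫ en1.hom ≫ biprod.fst -
            (biprod.inl ≫ en.inv ≫ K.d n (n + 1) ≫ en1.hom ≫ biprod.snd) ≫
              inv (biprod.inr ≫ en.inv ≫ K.d n (n + 1) ≫ en1.hom ≫ biprod.snd) ≫
              (biprod.inr ≫ en.inv ≫ K.d n (n + 1) ≫ en1.hom ≫ biprod.fst))) ∧
      (K'.d (n + 1) (n + 2) ≫ (eo (n + 2) (by omega) (by omega)).hom =
        e1.hom ≫ biprod.inl ≫ en1.inv ≫ K.d (n + 1) (n + 2)) := by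
  have hrel : (ComplexShape.up ℤ).Rel n (n + 1) := rfl
  have hne : n ≠ n + 1 := by omega
  let d := en.inv ≫ K.d n (n + 1) ≫ en1.hom
  have : IsIso (biprod.inr ≫ d ≫ biprod.snd) := by simpa only [d, Category.assoc]
  let E := (GaussianEliminationData.ofBiprod d).transfer en en1 (K.d n (n + 1)) (by simp [d])
  refine ⟨E.reducedComplex hrel hne, fun i h1 h2 => eqToIso (by simp [h1, h2]),
    eqToIso (by simp), eqToIso (by simp [hne.symm]), ⟨E.homotopyEquivReducedComplex hrel hne⟩,
    ?_, ?_, ?_, ?_⟩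
  · intro i h1 h2 h3 h4
    simp [E.incl_of_ne h1 h2, E.proj_of_ne h3 h4]
  · simp [E.incl_of_ne (j := n - 1) (by omega) (by omega), E.proj_source, E]
  · simp only [E.incl_source, E.proj_target hne, Category.assoc, eqToIso.hom, eqToHom_trans,
      eqToHom_refl, Category.comp_id]
    congr 1
    rw [GaussianEliminationData.transfer_reduced, GaussianEliminationData.ofBiprod_reduced]
    simp [d]
  · simp [E.incl_target hne, E.proj_of_ne (j := n + 2) (by omega) (by omega), E]
end
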